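/- arXiv:2202.06822 — 2 statements merged into one kernel-verified Lean document; each statement's English description precedes it below -/
import Mathlib

section
/- Let p and q be distinct primes and k ≥ 1. Define L_{p,q,k} = C_{p,q,1} ∪ C_{p,q,2} ∪ ... ∪ C_{p,q,k} as a poset ordered by divisibility, where C_{p,q,1} = {1, p, q, p², pq, p²q} and C_{p,q,r} = {p^{r-1}q^r, p^r q^r, p^{r+1}q^r, p^{r+1}q^{r-1}} for r > 1. Then L_{p,q,k} is a lattice (with join = lcm and meet = gcd), i.e., it is closed under lcm and gcd. -/
/-!
Every element of `L_{p,q,k}` is `p ^ a * q ^ b`, and since `p` and `q` are coprime the map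
`(a, b) ↦ p ^ a * q ^ b` sends componentwise `max` and `min` on `ℕ × ℕ` to `lcm` and `gcd`.
The exponent pairs occurring in `L_{p,q,k}` form a staircase around the diagonal of `ℕ × ℕ`,
which is closed under componentwise `max` and `min`.
-/

/-- The blocks `C_{p,q,r}`. -/
def Cpq (p q r : ℕ) : Set ℕ :=
  if r = 1 then {1, p, q, p ^ 2, p * q, p ^ 2 * q}
  else {p ^ (r - 1) * q ^ r, p ^ r * q ^ r, p ^ (r + 1) * q ^ r, p ^ (r + 1) * q ^ (r - 1)}

/-- The set `L_{p,q,k} = ⋃_{r=1}^k C_{p,q,r}`. -/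
def Lpqk (p q k : ℕ) : Set ℕ := ⋃ r ∈ Set.Icc 1 k, Cpq p q r

open Set

def powMulPow (p q : ℕ) (e : ℕ × ℕ) : ℕ := p ^ e.1 * q ^ e.2

def blockExponents (r : ℕ) : Set (ℕ × ℕ) :=
  {e | if r = 1 then e.1 ≤ 2 ∧ e.2 ≤ 1
    else (e.1 = r - 1 ∧ e.2 = r) ∨ (e.1 = r ∧ e.2 = r) ∨ (e.1 = r + 1 ∧ e.2 = r) ∨
      (e.1 = r + 1 ∧ e.2 = r - 1)}

def lpqkExponents (k : ℕ) : Set (ℕ × ℕ) :=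
  {e | (e.2 = 0 ∧ e.1 ≤ 1 ∧ 1 ≤ k) ∨ (1 ≤ e.2 ∧ e.2 ≤ k ∧ e.2 ≤ e.1 + 1 ∧ e.1 ≤ e.2 + 1) ∨
    (e.1 = e.2 + 2 ∧ e.2 < k)}

lemma Cpq_eq_image (p q r : ℕ) : Cpq p q r = powMulPow p q '' blockExponents r := by
  ext x
  simp only [Cpq, blockExponents, powMulPow, mem_image, mem_ofPred_eq, Prod.exists]
  split_ifs with hr
  · simp only [mem_insert_iff, mem_singleton_iff]
    constructor
    · rintro (rfl | rfl | rfl | rfl | rfl | rfl)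
      exacts [⟨0, 0, by simp⟩, ⟨1, 0, by simp⟩, ⟨0, 1, by simp⟩, ⟨2, 0, by simp⟩,
        ⟨1, 1, by simp⟩, ⟨2, 1, by simp⟩]
    · rintro ⟨a, b, ⟨ha, hb⟩, rfl⟩
      interval_cases a <;> interval_cases b <;> simp
  · simp only [mem_insert_iff, mem_singleton_iff]
    constructor
    · rintro (rfl | rfl | rfl | rfl)
      exacts [⟨r - 1, r, by simp⟩, ⟨r, r, by simp⟩, ⟨r + 1, r, by simp⟩, ⟨r + 1, r - 1, by simp⟩]
    · rintro ⟨a, b, h | h | h | h, rfl⟩ <;> obtain ⟨rfl, rfl⟩ := h <;> simp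

lemma biUnion_blockExponents (k : ℕ) :
    ⋃ r ∈ Icc 1 k, blockExponents r = lpqkExponents k := by
  ext ⟨a, b⟩
  simp only [mem_iUnion, mem_Icc, blockExponents, lpqkExponents, mem_ofPred_eq, exists_prop]
  constructor
  · rintro ⟨r, hr, h⟩
    split_ifs at h <;> omega
  · rintro (h | h | h)
    · exact ⟨1, by omega, by rw [if_pos rfl]; omega⟩
    · refine ⟨max b 1, by omega, ?_⟩
      split_ifs <;> omega
    · refine ⟨b + 1, by omega, ?_⟩
      split_ifs <;> omega

lemma Lpqk_eq_image (p q k : ℕ) : Lpqk p q k = powMulPow p q '' lpqkExponents k := by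
  simp only [Lpqk, Cpq_eq_image, ← image_iUnion₂, biUnion_blockExponents]

lemma isSublattice_lpqkExponents (k : ℕ) : IsSublattice (lpqkExponents k) where
  supClosed e he e' he' := by
    simp only [lpqkExponents, mem_ofPred_eq, Prod.fst_sup, Prod.snd_sup] at *
    omega
  infClosed e he e' he' := by
    simp only [lpqkExponents, mem_ofPred_eq, Prod.fst_inf, Prod.snd_inf] at *
    omega

lemma Nat.gcd_pow_pow (p a c : ℕ) : Nat.gcd (p ^ a) (p ^ c) = p ^ min a c := by
  rcases le_total a c with h | h
  · rw [min_eq_left h, Nat.gcd_eq_left (pow_dvd_pow p h)]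
  · rw [min_eq_right h, Nat.gcd_eq_right (pow_dvd_pow p h)]

lemma powMulPow_dvd_powMulPow {p q : ℕ} {e e' : ℕ × ℕ} (h : e ≤ e') :
    powMulPow p q e ∣ powMulPow p q e' :=
  mul_dvd_mul (pow_dvd_pow p h.1) (pow_dvd_pow q h.2)

lemma gcd_powMulPow {p q : ℕ} (hpq : p.Coprime q) (e e' : ℕ × ℕ) :
    Nat.gcd (powMulPow p q e) (powMulPow p q e') = powMulPow p q (e ⊓ e') := by
  simp only [powMulPow, Prod.fst_inf, Prod.snd_inf]
  rw [Nat.Coprime.gcd_mul _ (hpq.pow _ _), Nat.Coprime.gcd_mul_right_cancel _ (hpq.symm.pow _ _),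
    Nat.Coprime.gcd_mul_left_cancel _ (hpq.pow _ _), Nat.gcd_pow_pow, Nat.gcd_pow_pow]

lemma lcm_powMulPow {p q : ℕ} (hpq : p.Coprime q) (e e' : ℕ × ℕ) :
    Nat.lcm (powMulPow p q e) (powMulPow p q e') = powMulPow p q (e ⊔ e') := by
  have hprod : powMulPow p q e * powMulPow p q e' =
      powMulPow p q (e ⊓ e') * powMulPow p q (e ⊔ e') := by
    simp only [powMulPow, Prod.fst_inf, Prod.snd_inf, Prod.fst_sup, Prod.snd_sup]
    rw [mul_mul_mul_comm, mul_mul_mul_comm (p ^ min _ _), ← pow_add, ← pow_add, ← pow_add,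
      ← pow_add, min_add_max, min_add_max]
  rw [Nat.lcm, gcd_powMulPow hpq, hprod]
  rcases Nat.eq_zero_or_pos (powMulPow p q (e ⊓ e')) with h0 | hpos
  -- a zero gcd divides the right-hand side, which is therefore zero as well
  · rw [h0, Nat.div_zero, eq_comm, ← Nat.zero_dvd, ← h0]
    exact powMulPow_dvd_powMulPow inf_le_sup
  · exact Nat.mul_div_cancel_left _ hpos

theorem Lpqk_closed_lcm_gcd_general (p q k : ℕ) (hp : p.Prime) (hq : q.Prime) (hpq : p ≠ q) :
    ∀ x ∈ Lpqk p q k, ∀ y ∈ Lpqk p q k,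
      Nat.lcm x y ∈ Lpqk p q k ∧ Nat.gcd x y ∈ Lpqk p q k := by
  have hcop : p.Coprime q := (Nat.coprime_primes hp hq).mpr hpq
  rw [Lpqk_eq_image]
  rintro _ ⟨e, he, rfl⟩ _ ⟨e', he', rfl⟩
  have hsub := isSublattice_lpqkExponents k
  exact ⟨⟨e ⊔ e', hsub.supClosed he he', (lcm_powMulPow hcop e e').symm⟩,
    ⟨e ⊓ e', hsub.infClosed he he', (gcd_powMulPow hcop e e').symm⟩⟩

/-- for distinct primes `p, q` and `k ≥ 1`, the set `L_{p,q,k}` ordered by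
divisibility is a lattice: it is closed under `lcm` (join) and `gcd` (meet). -/
theorem Lpqk_closed_lcm_gcd (p q k : ℕ) (hp : p.Prime) (hq : q.Prime) (hpq : p ≠ q)
    (hk : 1 ≤ k) :
    ∀ x ∈ Lpqk p q k, ∀ y ∈ Lpqk p q k,
      Nat.lcm x y ∈ Lpqk p q k ∧ Nat.gcd x y ∈ Lpqk p q k :=
  Lpqk_closed_lcm_gcd_general p q k hp hq hpq
end

section
/- Let K be a field and let I be an ideal of a polynomial ring S over K admitting a monomial order ≺ such that the initial ideal in_≺(I) is a squarefree monomial ideal. Then I is radical. -/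
/-!
Turn `r` into a `MonomialOrder` and write `lm` for its leading exponent. If `f ^ n ∈ I`, then
`x ^ (n • lm f) ∈ in(I)`; as `in(I)` is generated by squarefree monomials, already `x ^ lm f ∈ in(I)`,
i.e. `lm g ≤ lm f` for some nonzero `g ∈ I`. Subtracting a monomial multiple of `g` from `f` stays
in `√I` and lowers the leading exponent, so well-founded induction on it gives `√I ≤ I`.
-/

open MvPolynomial

theorem Finsupp.le_of_le_nsmul_of_forall_le_one {σ : Type*} {e d : σ →₀ ℕ} {n : ℕ}
    (he : ∀ x, e x ≤ 1) (h : e ≤ n • d) : e ≤ d := fun x => by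
  rcases Nat.eq_zero_or_pos (d x) with hdx | hdx
  · simpa [hdx] using h x
  · exact (he x).trans hdx

theorem MvPolynomial.monomial_one_mem_ideal_span_monomial_image {σ R : Type*} [CommSemiring R]
    [Nontrivial R] {d : σ →₀ ℕ} {s : Set (σ →₀ ℕ)} :
    monomial d (1 : R) ∈ Ideal.span ((fun s => monomial s (1 : R)) '' s) ↔ ∃ e ∈ s, e ≤ d := by
  classical
  simp only [mem_ideal_span_monomial_image, support_monomial, one_ne_zero, if_false,
    Finset.mem_singleton, forall_eq]

namespace MonomialOrder

open scoped MonomialOrder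

variable {σ : Type*}

section OfRel

def SynOfRel (_r : (σ →₀ ℕ) → (σ →₀ ℕ) → Prop) : Type _ := σ →₀ ℕ

variable (r : (σ →₀ ℕ) → (σ →₀ ℕ) → Prop)

noncomputable instance : AddCommMonoid (SynOfRel r) := inferInstanceAs (AddCommMonoid (σ →₀ ℕ))

noncomputable instance [IsStrictTotalOrder (σ →₀ ℕ) r] : LinearOrder (SynOfRel r) := by
  classical exact linearOrderOfSTO (α := σ →₀ ℕ) r

variable {r} (hadd : ∀ a b c, r a b → r (a + c) (b + c)) (hbot : ∀ a, a ≠ 0 → r 0 a)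
include hadd hbot

theorem eq_or_rel_of_le {a b : σ →₀ ℕ} (h : a ≤ b) : a = b ∨ r a b := by
  obtain ⟨c, rfl⟩ := le_iff_exists_add.mp h
  rcases eq_or_ne c 0 with rfl | hc
  · exact .inl (add_zero a).symm
  · right
    simpa [add_comm] using hadd 0 c a (hbot c hc)

variable [IsStrictTotalOrder (σ →₀ ℕ) r] [Finite σ]

noncomputable def ofRel : MonomialOrder σ where
  syn := SynOfRel r
  isOrderedAddMonoid_syn.add_le_add_left := by
    rintro a b (rfl | h) c
    exacts [le_rfl, .inr (hadd a b c h)]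
  toSyn := AddEquiv.refl _
  toSyn_monotone _ _ := eq_or_rel_of_le hadd hbot
  -- Dickson's lemma: `r` extends the componentwise order, a well-quasi-order on `σ →₀ ℕ`.
  wellFoundedLT_syn :=
    have : WellQuasiOrderedLE (SynOfRel r) :=
      Monotone.wellQuasiOrderedLE_of_wellQuasiOrderedLE_of_surjective (α := σ →₀ ℕ)
        (f := id) (fun _ _ => eq_or_rel_of_le hadd hbot) Function.surjective_id
    inferInstance

theorem ofRel_toSyn_lt_iff {a b : σ →₀ ℕ} :
    (ofRel hadd hbot).toSyn a < (ofRel hadd hbot).toSyn b ↔ r a b :=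
  Iff.rfl

end OfRel

variable {m : MonomialOrder σ}

theorem mem_support_and_forall_lt_iff {R : Type*} [CommSemiring R] {f : MvPolynomial σ R}
    {d : σ →₀ ℕ} :
    (d ∈ f.support ∧ ∀ e ∈ f.support, e ≠ d → e ≺[m] d) ↔ f ≠ 0 ∧ m.degree f = d := by
  constructor
  · rintro ⟨hd, hlt⟩
    have hf : f ≠ 0 := ne_zero_iff.mpr ⟨d, mem_support_iff.mp hd⟩
    refine ⟨hf, by_contra fun hne => ?_⟩
    exact (m.le_degree hd).not_gt (hlt _ (m.degree_mem_support hf) hne)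
  · rintro ⟨hf, rfl⟩
    exact ⟨m.degree_mem_support hf, fun e he hne =>
      (m.le_degree he).lt_of_ne (m.toSyn.injective.ne hne)⟩

variable {K : Type*} [Field K]

theorem le_of_forall_exists_degree_le {I J : Ideal (MvPolynomial σ K)} (hIJ : I ≤ J)
    (h : ∀ f ∈ J, f ≠ 0 → ∃ g ∈ I, g ≠ 0 ∧ m.degree g ≤ m.degree f) : J ≤ I := by
  suffices ∀ a : m.syn, ∀ f ∈ J, m.toSyn (m.degree f) = a → f ∈ I from
    fun f hfJ => this _ f hfJ rfl
  intro a
  induction a using WellFoundedLT.induction with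
  | _ a ih =>
  rintro f hfJ rfl
  obtain rfl | hf := eq_or_ne f 0
  · exact I.zero_mem
  obtain ⟨g, hgI, hg0, hgf⟩ := h f hfJ hf
  have hg : IsUnit (m.leadingCoeff g) := (m.leadingCoeff_ne_zero_iff.mpr hg0).isUnit
  have hq : f - m.reduce hg f ∈ I := by
    rw [reduce, sub_sub_cancel]
    exact I.mul_mem_left _ hgI
  obtain hdeg | hdeg := eq_or_ne (m.degree f) 0
  · have hg_const : g = C (m.leadingCoeff g) :=
      m.eq_C_of_degree_eq_zero (nonpos_iff_eq_zero.mp (hdeg ▸ hgf))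
    rw [I.eq_top_of_isUnit_mem hgI (hg_const ▸ hg.map C)]
    exact Submodule.mem_top
  · have hred : m.reduce hg f ∈ I :=
      ih _ (m.degree_reduce_lt hg hgf hdeg) _
        (sub_sub_cancel f (m.reduce hg f) ▸ J.sub_mem hfJ (hIJ hq)) rfl
    simpa using I.add_mem hred hq

theorem isRadical_of_span_leadingTerm_eq {I : Ideal (MvPolynomial σ K)} {D : Set (σ →₀ ℕ)}
    (hD : ∀ d ∈ D, ∀ x, d x ≤ 1)
    (hinit : Ideal.span (m.leadingTerm '' I) = Ideal.span ((fun d => monomial d (1 : K)) '' D)) :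
    I.IsRadical := by
  rw [span_leadingTerm_eq_span_monomial', ← Set.image_image (fun d => monomial d (1 : K)) m.degree]
    at hinit
  refine m.le_of_forall_exists_degree_le I.le_radical fun f ⟨n, hfn⟩ hf => ?_
  obtain ⟨e, heD, hle⟩ : ∃ e ∈ D, e ≤ n • m.degree f := by
    rw [← monomial_one_mem_ideal_span_monomial_image (R := K), ← hinit, ← m.degree_pow]
    exact Ideal.subset_span ⟨_, ⟨f ^ n, ⟨hfn, pow_ne_zero n hf⟩, rfl⟩, rfl⟩
  obtain ⟨_, ⟨g, ⟨hgI, hg0⟩, rfl⟩, hge⟩ :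
      ∃ c ∈ m.degree '' ((I : Set (MvPolynomial σ K)) \ {0}), c ≤ e := by
    rw [← monomial_one_mem_ideal_span_monomial_image (R := K), hinit]
    exact Ideal.subset_span ⟨e, heD, rfl⟩
  exact ⟨g, hgI, hg0, hge.trans (Finsupp.le_of_le_nsmul_of_forall_le_one (hD e heD) hle)⟩

end MonomialOrder

/-- if an ideal `I` of a polynomial ring over a field admits a monomial
order (a linear order on exponent vectors, compatible with addition and with `0` as the
least element) whose initial ideal is a squarefree monomial ideal, then `I` is radical.
The initial ideal is the ideal generated by the leading monomials of the nonzero elements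
of `I`. -/
theorem radical_of_squarefree_initial_ideal (K : Type*) [Field K] (σ : Type*) [Finite σ]
    (r : (σ →₀ ℕ) → (σ →₀ ℕ) → Prop)
    (htri : IsTrichotomous (σ →₀ ℕ) r) (htrans : IsTrans (σ →₀ ℕ) r)
    (hirr : IsIrrefl (σ →₀ ℕ) r)
    (hadd : ∀ a b c : σ →₀ ℕ, r a b → r (a + c) (b + c))
    (hbot : ∀ a : σ →₀ ℕ, a ≠ 0 → r 0 a)
    (I : Ideal (MvPolynomial σ K))
    (D : Set (σ →₀ ℕ)) (hD : ∀ d ∈ D, ∀ x : σ, d x ≤ 1)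
    (hinit : Ideal.span {p : MvPolynomial σ K | ∃ f ∈ I, f ≠ 0 ∧
        ∃ d, (d ∈ f.support ∧ ∀ e ∈ f.support, e ≠ d → r e d) ∧ p = monomial d (1 : K)} =
      Ideal.span ((fun d => monomial d (1 : K)) '' D)) :
    I.IsRadical := by
  have : IsStrictTotalOrder (σ →₀ ℕ) r := { htri, htrans, hirr with }
  let m := MonomialOrder.ofRel hadd hbot
  have hlead : {p : MvPolynomial σ K | ∃ f ∈ I, f ≠ 0 ∧
      ∃ d, (d ∈ f.support ∧ ∀ e ∈ f.support, e ≠ d → r e d) ∧ p = monomial d (1 : K)} =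
      (fun f => monomial (m.degree f) 1) '' ((I : Set (MvPolynomial σ K)) \ {0}) := by
    ext p
    simp only [← MonomialOrder.ofRel_toSyn_lt_iff hadd hbot,
      MonomialOrder.mem_support_and_forall_lt_iff]
    constructor
    · rintro ⟨f, hfI, -, _, ⟨hf0, rfl⟩, rfl⟩
      exact ⟨f, ⟨hfI, hf0⟩, rfl⟩
    · rintro ⟨f, ⟨hfI, hf0⟩, rfl⟩
      exact ⟨f, hfI, hf0, _, ⟨hf0, rfl⟩, rfl⟩
  rw [hlead, ← MonomialOrder.span_leadingTerm_eq_span_monomial'] at hinit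
  exact MonomialOrder.isRadical_of_span_leadingTerm_eq hD hinit
end
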